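/- arXiv:1404.3410 — 3 statements merged into one kernel-verified Lean document; each statement's English description precedes it below -/
import Mathlib

section
/- Let X₁,...,Xₙ be i.i.d. nonnegative random variables, 0 < q < 1, x > 0, a > 0, and A(a) = E[exp_q(aX₁)] finite. Then P((1/n)∑Xₖ ≥ x) ≤ exp_{2-q}(-anx) · A(a)ⁿ. -/
open MeasureTheory ProbabilityTheory

lemma aux_lintegral_prod {Ω ι : Type*} [MeasurableSpace Ω] (μ : Measure Ω)
    [IsProbabilityMeasure μ] (h : ι → Ω → ENNReal) (hm : ∀ i, Measurable (h i))
    (hind : iIndepFun h μ) (s : Finset ι) :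
    ∫⁻ ω, ∏ i ∈ s, h i ω ∂μ = ∏ i ∈ s, ∫⁻ ω, h i ω ∂μ := by
  classical
  induction' s using Finset.induction_on with i s hi ih
  · simp
  · simp only [Finset.prod_insert hi]
    have hidf : IndepFun (h i) (fun ω => ∏ j ∈ s, h j ω) μ := by
      have h0 := (hind.indepFun_finset_prod_of_notMem hm hi).symm
      rwa [funext fun ω => Finset.prod_apply ω s h] at h0
    have key := ProbabilityTheory.lintegral_mul_eq_lintegral_mul_lintegral_of_indepFun''
      (μ := μ) (hm i).aemeasurable
      ((Finset.measurable_prod s (fun j _ => hm j)).aemeasurable) hidf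
    rw [key, ih]

lemma aux_prod_bound {ι : Type*} (c a p : ℝ) (hc : 0 < c) (ha : 0 ≤ a) (hp : 0 ≤ p)
    (s : Finset ι) (t : ι → ℝ) (ht : ∀ i, 0 ≤ t i) :
    (1 + c * (a * ∑ i ∈ s, t i)) ^ p ≤ ∏ i ∈ s, (1 + c * (a * t i)) ^ p := by
  classical
  induction' s using Finset.induction_on with i s hi ih
  · simp
  · rw [Finset.sum_insert hi, Finset.prod_insert hi]
    set S := ∑ j ∈ s, t j with hS
    have hS0 : 0 ≤ S := Finset.sum_nonneg fun j _ => ht j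
    have hca1 : (0:ℝ) ≤ c * (a * t i) := mul_nonneg hc.le (mul_nonneg ha (ht i))
    have hca2 : (0:ℝ) ≤ c * (a * S) := mul_nonneg hc.le (mul_nonneg ha hS0)
    have h1 : (0:ℝ) ≤ 1 + c * (a * (t i + S)) := by nlinarith
    have h2 : 1 + c * (a * (t i + S)) ≤ (1 + c * (a * t i)) * (1 + c * (a * S)) := by
      nlinarith [mul_nonneg hca1 hca2]
    calc (1 + c * (a * (t i + S))) ^ p
        ≤ ((1 + c * (a * t i)) * (1 + c * (a * S))) ^ p :=
          Real.rpow_le_rpow h1 h2 hp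
      _ = (1 + c * (a * t i)) ^ p * (1 + c * (a * S)) ^ p := by
          rw [Real.mul_rpow (by linarith) (by linarith)]
      _ ≤ (1 + c * (a * t i)) ^ p * ∏ j ∈ s, (1 + c * (a * t j)) ^ p := by
          exact mul_le_mul_of_nonneg_left ih (Real.rpow_nonneg (by linarith) _)

/-- Deformed inequality for fat tails: for i.i.d. nonnegative random variables,
`0 < q < 1`, `x > 0`, `a > 0` and `A(a) = E[exp_q(a X₁)]` finite, one has
`P((1/n)∑ Xₖ ≥ x) ≤ exp_{2-q}(-anx) · A(a)ⁿ`. -/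
theorem deformed_chernoff_fat {Ω : Type*} [MeasurableSpace Ω]
    (μ : Measure Ω) [IsProbabilityMeasure μ]
    (n : ℕ) (hn : 0 < n) (X : Fin n → Ω → ℝ)
    (i0 : Fin n) (hi0 : i0 = ⟨0, hn⟩)
    (hmeas : ∀ i, Measurable (X i))
    (hpos : ∀ i, ∀ ω, 0 ≤ X i ω)
    (hindep : iIndepFun X μ)
    (hident : ∀ i, IdentDistrib (X i) (X i0) μ μ)
    (q a x : ℝ) (hq0 : 0 < q) (hq1 : q < 1) (ha : 0 < a) (hx : 0 < x)
    (hint : Integrable (fun ω => (1 + (1 - q) * (a * X i0 ω)) ^ (1 / (1 - q))) μ) :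
    μ {ω | x ≤ (1 / (n : ℝ)) * ∑ k, X k ω} ≤
      ENNReal.ofReal
        ((1 + (1 - q) * (a * ((n : ℝ) * x))) ^ (-(1 / (1 - q))) *
          (∫ ω, (1 + (1 - q) * (a * X i0 ω)) ^ (1 / (1 - q)) ∂μ) ^ n) := by
  classical
  have hc : (0:ℝ) < 1 - q := by linarith
  set p : ℝ := 1 / (1 - q) with hpdef
  have hp : 0 < p := by positivity
  have hbnn : ∀ r : ℝ, 0 ≤ r → (0:ℝ) ≤ 1 + (1 - q) * (a * r) := fun r hr => by
    nlinarith [mul_nonneg hc.le (mul_nonneg ha.le hr)]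
  set φ : ℝ → ENNReal := fun t => ENNReal.ofReal ((1 + (1 - q) * (a * t)) ^ p) with hφdef
  have hφm : Measurable φ := by
    apply Measurable.ennreal_ofReal
    exact (Real.continuous_rpow_const hp.le).measurable.comp
      (measurable_const.add (((measurable_id.const_mul a)).const_mul (1 - q)))
  set h : Fin n → Ω → ENNReal := fun i => φ ∘ X i with hhdef
  have hhm : ∀ i, Measurable (h i) := fun i => hφm.comp (hmeas i)
  have hhind : iIndepFun h μ := hindep.comp _ (fun _ => hφm)
  set A : ℝ := ∫ ω, (1 + (1 - q) * (a * X i0 ω)) ^ p ∂μ with hAdef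
  have hA0 : 0 ≤ A := integral_nonneg fun ω =>
    Real.rpow_nonneg (hbnn _ (hpos i0 ω)) _
  -- each lintegral equals ofReal A
  have hli : ∀ i, ∫⁻ ω, h i ω ∂μ = ENNReal.ofReal A := by
    intro i
    have hid : IdentDistrib (h i) (h i0) μ μ := (hident i).comp hφm
    rw [hid.lintegral_eq]
    have := MeasureTheory.ofReal_integral_eq_lintegral_ofReal hint
      (Filter.Eventually.of_forall fun ω =>
        Real.rpow_nonneg (hbnn _ (hpos i0 ω)) _)
    exact this.symm
  -- the product bound
  set K : ℝ := (1 + (1 - q) * (a * ((n : ℝ) * x))) ^ p with hKdef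
  have hnx0 : (0:ℝ) < (n:ℝ) * x := by
    have : (0:ℝ) < (n:ℝ) := by exact_mod_cast hn
    positivity
  have hKpos : 0 < K := by
    apply Real.rpow_pos_of_pos
    have := hbnn _ hnx0.le
    nlinarith [mul_pos hc (mul_pos ha hnx0)]
  have hsub : {ω | x ≤ (1 / (n : ℝ)) * ∑ k, X k ω} ⊆
      {ω | ENNReal.ofReal K ≤ ∏ i, h i ω} := by
    intro ω hω
    simp only [Set.mem_setOf_eq] at hω ⊢
    have hnx : (n:ℝ) * x ≤ ∑ k, X k ω := by
      have hn' : (0:ℝ) < (n:ℝ) := by exact_mod_cast hn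
      rw [one_div] at hω
      calc (n:ℝ) * x ≤ (n:ℝ) * ((n:ℝ)⁻¹ * ∑ k, X k ω) := by
            exact mul_le_mul_of_nonneg_left hω (le_of_lt hn')
        _ = ∑ k, X k ω := by field_simp
    have h1 : K ≤ (1 + (1 - q) * (a * ∑ k, X k ω)) ^ p := by
      apply Real.rpow_le_rpow (hbnn _ hnx0.le) _ hp.le
      have : a * ((n:ℝ) * x) ≤ a * ∑ k, X k ω := mul_le_mul_of_nonneg_left hnx ha.le
      nlinarith
    have h2 : (1 + (1 - q) * (a * ∑ k, X k ω)) ^ p ≤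
        ∏ i, (1 + (1 - q) * (a * X i ω)) ^ p :=
      aux_prod_bound (1 - q) a p hc ha.le hp.le Finset.univ (fun k => X k ω)
        (fun k => hpos k ω)
    calc ENNReal.ofReal K ≤ ENNReal.ofReal (∏ i, (1 + (1 - q) * (a * X i ω)) ^ p) :=
          ENNReal.ofReal_le_ofReal (le_trans h1 h2)
      _ = ∏ i, h i ω := by
          rw [ENNReal.ofReal_prod_of_nonneg (fun i _ =>
            Real.rpow_nonneg (hbnn _ (hpos i ω)) _)]
          rfl
  -- Markov inequality
  have hmarkov : ENNReal.ofReal K * μ {ω | x ≤ (1 / (n : ℝ)) * ∑ k, X k ω} ≤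
      ∫⁻ ω, ∏ i, h i ω ∂μ := by
    calc ENNReal.ofReal K * μ {ω | x ≤ (1 / (n : ℝ)) * ∑ k, X k ω}
        ≤ ENNReal.ofReal K * μ {ω | ENNReal.ofReal K ≤ ∏ i, h i ω} :=
          mul_le_mul_right (measure_mono hsub) _
      _ ≤ ∫⁻ ω, ∏ i, h i ω ∂μ :=
          mul_meas_ge_le_lintegral₀
            (Finset.measurable_prod Finset.univ (fun i _ => hhm i)).aemeasurable _
  have hprodint : ∫⁻ ω, ∏ i, h i ω ∂μ = ENNReal.ofReal (A ^ n) := by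
    rw [aux_lintegral_prod μ h hhm hhind Finset.univ]
    simp only [hli]
    rw [Finset.prod_const, Finset.card_univ, Fintype.card_fin, ← ENNReal.ofReal_pow hA0]
  rw [hprodint] at hmarkov
  -- conclude
  have hKne : ENNReal.ofReal K ≠ 0 := by simp [ENNReal.ofReal_eq_zero, not_le, hKpos]
  have hKnetop : ENNReal.ofReal K ≠ ⊤ := ENNReal.ofReal_ne_top
  have final : μ {ω | x ≤ (1 / (n : ℝ)) * ∑ k, X k ω} ≤
      (ENNReal.ofReal K)⁻¹ * ENNReal.ofReal (A ^ n) := by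
    rw [mul_comm] at hmarkov
    have := (ENNReal.le_div_iff_mul_le (Or.inl hKne) (Or.inl hKnetop)).mpr hmarkov
    rwa [ENNReal.div_eq_inv_mul] at this
  refine final.trans (le_of_eq ?_)
  have hbase : (0:ℝ) ≤ 1 + (1 - q) * (a * ((n : ℝ) * x)) :=
    hbnn _ hnx0.le
  rw [Real.rpow_neg hbase, ← hKdef,
    ENNReal.ofReal_mul (by positivity), ENNReal.ofReal_inv_of_pos hKpos]
end

section
/- Let 0 < q < 1 and η(x) = (1+(1-q)x)^{-1/(1-q)}. Then for every fixed x > 0, limₙ→∞ n^{q/(1-q)} · (1 - (1-η(nx))ⁿ) = ((1-q)x)^{-1/(1-q)}. -/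
open Filter

/-- For `0 < q < 1`, `η y = (1+(1-q)y)^(-1/(1-q))` and fixed `x > 0`,
`n^{q/(1-q)} · (1 - (1 - η(nx))ⁿ) → ((1-q)x)^{-1/(1-q)}` as `n → ∞`. -/
theorem lower_bound_asymptotics (q x : ℝ) (hq0 : 0 < q) (hq1 : q < 1) (hx : 0 < x) :
    Tendsto
      (fun n : ℕ =>
        (n : ℝ) ^ (q / (1 - q)) *
          (1 - (1 - (1 + (1 - q) * ((n : ℝ) * x)) ^ (-(1 / (1 - q)))) ^ n))
      atTop (nhds (((1 - q) * x) ^ (-(1 / (1 - q))))) := by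
  have h1q : 0 < 1 - q := by linarith
  set α : ℝ := 1 / (1 - q) with hα
  have hα1 : 1 < α := by
    rw [hα, lt_div_iff₀ h1q]; nlinarith
  have hα0 : 0 < α := lt_trans one_pos hα1
  set a : ℕ → ℝ := fun n => (1 + (1 - q) * ((n : ℝ) * x)) ^ (-α) with ha
  have hbase : ∀ n : ℕ, (1:ℝ) ≤ 1 + (1 - q) * ((n:ℝ) * x) := by
    intro n
    have : (0:ℝ) ≤ (1 - q) * ((n:ℝ) * x) := by positivity
    linarith
  have hbpos : ∀ n : ℕ, (0:ℝ) < 1 + (1 - q) * ((n:ℝ) * x) := fun n =>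
    lt_of_lt_of_le one_pos (hbase n)
  have ha0 : ∀ n, 0 < a n := fun n => Real.rpow_pos_of_pos (hbpos n) _
  have ha1 : ∀ n, a n ≤ 1 := fun n =>
    Real.rpow_le_one_of_one_le_of_nonpos (hbase n) (by linarith)
  -- Step 1 : n^α * a n → ((1-q)x)^(-α)
  have hstep1 : Tendsto (fun n : ℕ => (n:ℝ) ^ α * a n) atTop
      (nhds (((1 - q) * x) ^ (-α))) := by
    have h0 : Tendsto (fun n : ℕ => 1 / (n:ℝ) + (1 - q) * x) atTop
        (nhds ((1 - q) * x)) := by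
      have h : Tendsto (fun n : ℕ => 1 / (n:ℝ)) atTop (nhds 0) := tendsto_one_div_atTop_nhds_zero_nat
      simpa using h.add (tendsto_const_nhds : Tendsto (fun _ : ℕ => (1-q)*x) atTop _)
    have hc : ContinuousAt (fun y : ℝ => y ^ (-α)) ((1 - q) * x) :=
      Real.continuousAt_rpow_const _ _ (Or.inl (by positivity))
    have h2 := hc.tendsto.comp h0
    apply h2.congr'
    filter_upwards [eventually_ge_atTop 1] with n hn
    have hn0 : (0:ℝ) < n := by exact_mod_cast hn
    show (1 / (n:ℝ) + (1 - q) * x) ^ (-α) = (n:ℝ) ^ α * a n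
    have hdiv : 1 / (n:ℝ) + (1 - q) * x = (1 + (1 - q) * ((n:ℝ) * x)) / n := by
      field_simp
    rw [hdiv, Real.div_rpow (le_of_lt (hbpos n)) hn0.le, ha,
      Real.rpow_neg hn0.le, div_eq_mul_inv, inv_inv]
    ring
  -- Step 2 : n * a n → 0
  have hstep2 : Tendsto (fun n : ℕ => (n:ℝ) * a n) atTop (nhds 0) := by
    have h3 : Tendsto (fun n : ℕ => (n:ℝ) ^ (1 - α)) atTop (nhds 0) := by
      have h := (tendsto_rpow_neg_atTop (by linarith : (0:ℝ) < α - 1)).comp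
        tendsto_natCast_atTop_atTop (α := ℕ)
      simpa [neg_sub, Function.comp_def] using h
    have h4 := hstep1.mul h3
    rw [mul_zero] at h4
    apply h4.congr'
    filter_upwards [eventually_ge_atTop 1] with n hn
    have hn0 : (0:ℝ) < n := by exact_mod_cast hn
    have : (n:ℝ) ^ α * a n * (n:ℝ) ^ (1 - α) = (n:ℝ) ^ (α + (1 - α)) * a n := by
      rw [Real.rpow_add hn0]; ring
    rw [this]
    norm_num [Real.rpow_one]
  -- (n-1) * a n → 0 by squeeze
  have hstep2' : Tendsto (fun n : ℕ => ((n:ℝ) - 1) * a n) atTop (nhds 0) := by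
    apply tendsto_of_tendsto_of_tendsto_of_le_of_le' tendsto_const_nhds hstep2
    · filter_upwards [eventually_ge_atTop 1] with n hn
      have hn0 : (1:ℝ) ≤ n := by exact_mod_cast hn
      have := (ha0 n).le
      nlinarith
    · filter_upwards [] with n
      nlinarith [(ha0 n).le, (ha0 n)]
  -- lower sequence tends to the limit
  have hlow : Tendsto (fun n : ℕ => (n:ℝ) ^ α * a n * (1 - ((n:ℝ) - 1) * a n)) atTop
      (nhds (((1 - q) * x) ^ (-α))) := by
    have h5 : Tendsto (fun n : ℕ => 1 - ((n:ℝ) - 1) * a n) atTop (nhds 1) := by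
      have := (tendsto_const_nhds (x := (1:ℝ)) (f := atTop (α := ℕ))).sub hstep2'
      simpa using this
    have := hstep1.mul h5
    simpa using this
  -- exponent rewriting
  have hqα : q / (1 - q) = α - 1 := by
    rw [hα]; field_simp; ring
  -- final squeeze
  have hkey : Tendsto
      (fun n : ℕ => (n:ℝ) ^ (α - 1) * (1 - (1 - a n) ^ n)) atTop
      (nhds (((1 - q) * x) ^ (-α))) := by
    apply tendsto_of_tendsto_of_tendsto_of_le_of_le' hlow hstep1
    · -- lower bound
      filter_upwards [eventually_ge_atTop 1] with n hn
      have hn0 : (0:ℝ) < n := by exact_mod_cast hn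
      set t : ℝ := 1 - a n with ht
      have ht0 : 0 ≤ t := by have := ha1 n; simp [ht]; linarith
      have ht1 : t ≤ 1 := by have := (ha0 n).le; simp [ht]; linarith
      -- 1 - t^n ≥ n * a n * t^(n-1)
      have hsum : (n:ℝ) * t ^ (n - 1) ≤ ∑ i ∈ Finset.range n, t ^ i := by
        have := Finset.card_nsmul_le_sum (Finset.range n) (fun i => t ^ i)
          (t ^ (n - 1)) (fun i hi => pow_le_pow_of_le_one ht0 ht1
            (Nat.le_sub_one_of_lt (Finset.mem_range.mp hi)))
        simpa [nsmul_eq_mul] using this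
      have hgeo : (∑ i ∈ Finset.range n, t ^ i) * (t - 1) = t ^ n - 1 :=
        geom_sum_mul t n
      have h6 : (n:ℝ) * a n * t ^ (n - 1) ≤ 1 - t ^ n := by
        have haeq : a n = 1 - t := by rw [ht]; ring
        have hmul := mul_le_mul_of_nonneg_right hsum (ha0 n).le
        calc (n:ℝ) * a n * t ^ (n - 1)
            = (n:ℝ) * t ^ (n - 1) * a n := by ring
          _ ≤ (∑ i ∈ Finset.range n, t ^ i) * a n := hmul
          _ = 1 - t ^ n := by rw [haeq]; linear_combination -hgeo
      -- Bernoulli : t^(n-1) ≥ 1 - (n-1) * a n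
      have hbern : 1 - ((n:ℝ) - 1) * a n ≤ t ^ (n - 1) := by
        have := one_add_mul_le_pow (a := -(a n)) (by nlinarith [ha1 n]) (n - 1)
        have hcast : ((n - 1 : ℕ) : ℝ) = (n:ℝ) - 1 := by
          have h := Nat.cast_sub hn (R := ℝ); simpa using h
        rw [hcast] at this
        calc 1 - ((n:ℝ) - 1) * a n = 1 + ((n:ℝ) - 1) * (-(a n)) := by ring
          _ ≤ (1 + -(a n)) ^ (n - 1) := this
          _ = t ^ (n - 1) := by rw [ht]; ring_nf
      have h7 : (n:ℝ) * a n * (1 - ((n:ℝ) - 1) * a n) ≤ 1 - t ^ n := by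
        have hna : 0 ≤ (n:ℝ) * a n := by positivity
        calc (n:ℝ) * a n * (1 - ((n:ℝ) - 1) * a n)
            ≤ (n:ℝ) * a n * t ^ (n - 1) := mul_le_mul_of_nonneg_left hbern hna
          _ ≤ 1 - t ^ n := h6
      have hpow : (n:ℝ) ^ (α - 1) * (n:ℝ) = (n:ℝ) ^ α := by
        have h := Real.rpow_add hn0 (α - 1) 1
        rw [Real.rpow_one] at h
        rw [← h]; norm_num
      have h8 := mul_le_mul_of_nonneg_left h7 (Real.rpow_nonneg hn0.le (α - 1))
      calc (n:ℝ) ^ α * a n * (1 - ((n:ℝ) - 1) * a n)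
          = (n:ℝ) ^ (α - 1) * ((n:ℝ) * a n * (1 - ((n:ℝ) - 1) * a n)) := by
            rw [← hpow]; ring
        _ ≤ (n:ℝ) ^ (α - 1) * (1 - t ^ n) := h8
        _ = (n:ℝ) ^ (α - 1) * (1 - (1 - a n) ^ n) := by rw [ht]
    · -- upper bound
      filter_upwards [eventually_ge_atTop 1] with n hn
      have hn0 : (0:ℝ) < n := by exact_mod_cast hn
      have hbern : 1 - (n:ℝ) * a n ≤ (1 - a n) ^ n := by
        have := one_add_mul_le_pow (a := -(a n)) (by nlinarith [ha1 n]) n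
        calc 1 - (n:ℝ) * a n = 1 + (n:ℝ) * (-(a n)) := by ring
          _ ≤ (1 + -(a n)) ^ n := this
          _ = (1 - a n) ^ n := by ring_nf
      have h7 : 1 - (1 - a n) ^ n ≤ (n:ℝ) * a n := by linarith
      have hpow : (n:ℝ) ^ (α - 1) * (n:ℝ) = (n:ℝ) ^ α := by
        have h := Real.rpow_add hn0 (α - 1) 1
        rw [Real.rpow_one] at h
        rw [← h]; norm_num
      have h8 := mul_le_mul_of_nonneg_left h7 (Real.rpow_nonneg hn0.le (α - 1))
      calc (n:ℝ) ^ (α - 1) * (1 - (1 - a n) ^ n)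
          ≤ (n:ℝ) ^ (α - 1) * ((n:ℝ) * a n) := h8
        _ = (n:ℝ) ^ α * a n := by rw [← hpow]; ring
  rw [hqα]
  exact hkey
end

section
/- Let X₁,...,Xₙ be i.i.d. uniform on [0,1]. Then for 1/2 ≤ x ≤ 1, P((1/n)∑ₖ Xₖ ≥ x) ≤ (4x(1-x))ⁿ. -/
open MeasureTheory ProbabilityTheory
open scoped ENNReal

namespace UniformLDAux

open Real

lemma regionB_core (x : ℝ) (h1 : 1/2 ≤ x) (h2 : x ≤ 33/50) :
    (2500/3)*x^6 - 1250*x^5 + (2000/3)*x^4 - (24875/162)*x^3 - (425/54)*x^2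
      + (12775/864)*x - 12505/5184 ≤ 0 := by
  nlinarith [mul_nonneg (sub_nonneg.2 h1) (sub_nonneg.2 h2), sq_nonneg (x - 1/2),
    sq_nonneg (x - 33/50),
    mul_nonneg (mul_nonneg (sub_nonneg.2 h1) (sub_nonneg.2 h1)) (sub_nonneg.2 h2),
    mul_nonneg (mul_nonneg (sub_nonneg.2 h2) (sub_nonneg.2 h2)) (sub_nonneg.2 h1), sq_nonneg x]

lemma regionB (x : ℝ) (h1 : 1/2 ≤ x) (h2 : x ≤ 33/50) :
    exp (5*(2*x-1)) - 1 ≤ 4*x*(1-x)*(5*(2*x-1)) * exp ((5*(2*x-1))*x) := by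
  set t : ℝ := 5*(2*x-1) with ht
  have ht0 : 0 ≤ t/2 := by simp only [ht]; linarith
  have hthalf : t/2 ≤ 1 := by simp only [ht]; linarith
  have hub : exp (t/2) ≤ 1 + t/2 + (t/2)^2/2 + (2/9)*(t/2)^3 := by
    have h := Real.exp_bound' ht0 hthalf (n := 3) (by norm_num)
    simp [Finset.sum_range_succ, Nat.factorial] at h
    nlinarith [h]
  have hexpt : exp t = exp (t/2) * exp (t/2) := by
    rw [← Real.exp_add]; ring_nf
  have hubt : exp t ≤ (1 + t/2 + (t/2)^2/2 + (2/9)*(t/2)^3)^2 := by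
    rw [hexpt, sq]
    nlinarith [hub, (exp_pos (t/2)).le]
  have htx0 : 0 ≤ t*x := by
    have : (0:ℝ) ≤ t := by linarith
    nlinarith
  have hlb : 1 + t*x + (t*x)^2/2 + (t*x)^3/6 ≤ exp (t*x) := by
    have h := Real.sum_le_exp_of_nonneg htx0 4
    simp [Finset.sum_range_succ, Nat.factorial] at h
    nlinarith [h]
  have hrhs : 4*x*(1-x)*t*(1 + t*x + (t*x)^2/2 + (t*x)^3/6) ≤ 4*x*(1-x)*t * exp (t*x) := by
    have hx1 : 0 ≤ 1 - x := by linarith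
    have hpos : 0 ≤ 4*x*(1-x)*t := by
      have ht0' : (0:ℝ) ≤ t := by linarith
      positivity
    exact mul_le_mul_of_nonneg_left hlb hpos
  have hcore := regionB_core x h1 h2
  have hkey : (1 + t/2 + (t/2)^2/2 + (2/9)*(t/2)^3)^2 - 1
      - 4*x*(1-x)*t*(1 + t*x + (t*x)^2/2 + (t*x)^3/6)
      = (2*x-1)^3 * ((2500/3)*x^6 - 1250*x^5 + (2000/3)*x^4 - (24875/162)*x^3
        - (425/54)*x^2 + (12775/864)*x - 12505/5184) := by
    simp only [ht]; ring
  have hd3 : 0 ≤ (2*x-1)^3 := by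
    have : (0:ℝ) ≤ 2*x-1 := by linarith
    positivity
  nlinarith [mul_nonpos_of_nonneg_of_nonpos hd3 hcore, hubt, hrhs, hkey]

lemma regionA (x : ℝ) (h1 : 33/50 ≤ x) (h2 : x < 1) :
    exp ((1-x)⁻¹) - 1 ≤ 4*x*(1-x)*(1-x)⁻¹ * exp ((1-x)⁻¹*x) := by
  have hb : 0 < 1 - x := by linarith
  set t : ℝ := (1-x)⁻¹ with htdef
  have htb : (1-x) * t = 1 := mul_inv_cancel₀ hb.ne'
  have hsplit : exp t = exp (t*x) * exp 1 := by
    rw [← exp_add]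
    congr 1
    have : t = t*x + t*(1-x) := by ring
    rw [this, mul_comm (1-x) t] at *
    linarith [htb]
  have hrw : 4*x*(1-x)*t = 4*x := by
    rw [mul_assoc]; rw [htb]; ring
  rw [hrw, hsplit]
  have hE : 0 < exp (t*x) := exp_pos _
  rcases le_or_gt (exp 1) (4*x) with hc | hc
  · nlinarith [mul_le_mul_of_nonneg_left hc hE.le]
  · have he9 : exp 1 < 2.7182818286 := Real.exp_one_lt_d9
    have hx68 : x < 17/25 := by nlinarith
    have hu : t*x ≤ 17/8 := by
      rw [htdef]
      rw [inv_mul_le_iff₀ hb]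
      nlinarith
    have h18 : exp (1/8 : ℝ) ≤ 8/7 := by
      have h := Real.add_one_le_exp (-(1/8) : ℝ)
      rw [Real.exp_neg] at h
      have hp : 0 < exp (1/8 : ℝ) := exp_pos _
      rw [le_inv_comm₀ (by norm_num) hp] at h
      · linarith [h]
    have h178 : exp ((17:ℝ)/8) = exp 1 * exp 1 * exp (1/8) := by
      rw [← exp_add, ← exp_add]; norm_num
    have hEb : exp (t*x) ≤ 2.7182818286^2 * (8/7) := by
      calc exp (t*x) ≤ exp ((17:ℝ)/8) := exp_le_exp.2 hu
        _ = exp 1 * exp 1 * exp (1/8) := h178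
        _ ≤ 2.7182818286^2 * (8/7) := by
            nlinarith [exp_pos (1:ℝ), exp_pos ((1:ℝ)/8)]
    have hfac : (0:ℝ) ≤ exp 1 - 4*x := by linarith
    have hfacb : exp 1 - 4*x ≤ 2.7182818286 - 264/100 := by nlinarith
    nlinarith [mul_le_mul hfacb hEb hE.le (by norm_num : (0:ℝ) ≤ 2.7182818286 - 264/100)]

lemma integrable_exp_unif {Ω : Type*} [MeasurableSpace Ω] (μ : Measure Ω)
    (Y : Ω → ℝ) (hY : Measurable Y)
    (hmap : Measure.map Y μ = volume.restrict (Set.Icc (0:ℝ) 1)) (t : ℝ) :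
    Integrable (fun ω => exp (t * Y ω)) μ := by
  have hcont : Continuous (fun y : ℝ => exp (t * y)) := by continuity
  have h1 : Integrable (fun y : ℝ => exp (t * y)) (Measure.map Y μ) := by
    rw [hmap]; exact hcont.integrableOn_Icc
  have h2 := (integrable_map_measure hcont.aestronglyMeasurable hY.aemeasurable).mp h1
  exact h2

lemma mgf_unif {Ω : Type*} [MeasurableSpace Ω] (μ : Measure Ω)
    (Y : Ω → ℝ) (hY : Measurable Y)
    (hmap : Measure.map Y μ = volume.restrict (Set.Icc (0:ℝ) 1)) (t : ℝ) (ht : t ≠ 0) :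
    mgf Y μ t = (exp t - 1) / t := by
  have hcont : Continuous (fun y : ℝ => exp (t * y)) := by continuity
  have h1 : mgf Y μ t = ∫ y, exp (t * y) ∂(Measure.map Y μ) := by
    rw [integral_map hY.aemeasurable hcont.aestronglyMeasurable]
    rfl
  rw [h1, hmap]
  have h2 : ∫ y in Set.Icc (0:ℝ) 1, exp (t * y) = ∫ y in (0:ℝ)..1, exp (t * y) := by
    rw [intervalIntegral.integral_of_le (by norm_num : (0:ℝ) ≤ 1),
      MeasureTheory.integral_Icc_eq_integral_Ioc]
  rw [h2]
  have h3 : (t * ∫ y in (0:ℝ)..1, exp (t * y)) = ∫ y in (t*0)..(t*1), exp y :=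
    intervalIntegral.mul_integral_comp_mul_left (f := exp) t
  have h4 : (∫ y in (t*0)..(t*1), exp y) = exp t - 1 := by
    rw [integral_exp]; norm_num
  rw [eq_div_iff ht, mul_comm, h3, h4]

end UniformLDAux

open Real UniformLDAux

/-- For i.i.d. random variables uniform on `[0,1]` and `1/2 ≤ x ≤ 1`,
`P((1/n)∑ₖ Xₖ ≥ x) ≤ (4x(1-x))ⁿ`. -/
theorem uniform_large_deviation {Ω : Type*} [MeasurableSpace Ω]
    (μ : Measure Ω) [IsProbabilityMeasure μ]
    (n : ℕ) (hn : 0 < n) (X : Fin n → Ω → ℝ)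
    (hmeas : ∀ i, Measurable (X i))
    (hindep : iIndepFun X μ)
    (hmap : ∀ i, Measure.map (X i) μ = volume.restrict (Set.Icc (0:ℝ) 1))
    (x : ℝ) (hx1 : 1 / 2 ≤ x) (hx2 : x ≤ 1) :
    (μ {ω | x ≤ (1 / (n : ℝ)) * ∑ k, X k ω}).toReal ≤ (4 * x * (1 - x)) ^ n := by
  have hn' : (0:ℝ) < (n:ℝ) := Nat.cast_pos.mpr hn
  rcases eq_or_lt_of_le hx2 with hxeq1 | hxlt1
  · -- x = 1 : the event is null
    have hsub : {ω | x ≤ (1 / (n : ℝ)) * ∑ k, X k ω} ⊆ ⋃ i, X i ⁻¹' Set.Ici (1:ℝ) := by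
      intro ω hω
      by_contra hmem
      simp only [Set.mem_iUnion, Set.mem_preimage, Set.mem_Ici, not_exists, not_le] at hmem
      have hsum : ∑ k, X k ω < ∑ _k : Fin n, (1:ℝ) :=
        Finset.sum_lt_sum_of_nonempty (Finset.univ_nonempty_iff.2 (Fin.pos_iff_nonempty.mp hn))
          (fun i _ => hmem i)
      rw [Finset.sum_const, Finset.card_univ, Fintype.card_fin, nsmul_eq_mul, mul_one] at hsum
      have hω' : x ≤ (1 / (n : ℝ)) * ∑ k, X k ω := hω
      have hlt : (1 / (n : ℝ)) * ∑ k, X k ω < 1 := by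
        rw [one_div]
        rw [inv_mul_lt_iff₀ hn', mul_one]
        exact hsum
      rw [hxeq1] at hω'
      linarith
    have hnull : ∀ i, μ (X i ⁻¹' Set.Ici (1:ℝ)) = 0 := by
      intro i
      have hm := Measure.map_apply (μ := μ) (hmeas i) (measurableSet_Ici (a := (1:ℝ)))
      rw [hmap i] at hm
      rw [← hm, Measure.restrict_apply measurableSet_Ici]
      have : Set.Ici (1:ℝ) ∩ Set.Icc 0 1 = {1} := by
        ext y
        simp only [Set.mem_inter_iff, Set.mem_Ici, Set.mem_Icc, Set.mem_singleton_iff]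
        constructor
        · rintro ⟨h1, _, h3⟩; linarith
        · rintro rfl; norm_num
      rw [this]
      exact Real.volume_singleton
    have hz : μ {ω | x ≤ (1 / (n : ℝ)) * ∑ k, X k ω} = 0 := by
      refine measure_mono_null hsub ?_
      refine measure_iUnion_null_iff.mpr hnull
    rw [hz]
    simp [hxeq1, zero_pow hn.ne']
  · rcases eq_or_lt_of_le hx1 with hxeqh | hxgth
    · -- x = 1/2 : trivial bound by 1
      have hb : (4 * x * (1 - x)) ^ n = 1 := by
        rw [← hxeqh]; norm_num
      rw [hb]
      have h1 : μ {ω | x ≤ (1 / (n : ℝ)) * ∑ k, X k ω} ≤ 1 := prob_le_one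
      calc (μ _).toReal ≤ (1:ℝ≥0∞).toReal :=
            ENNReal.toReal_mono (by norm_num) h1
        _ = 1 := by simp
    · -- 1/2 < x < 1 : Chernoff
      have hx0 : (0:ℝ) ≤ x := by linarith
      have hb0 : (0:ℝ) ≤ 1 - x := by linarith
      have key : ∀ t : ℝ, 0 < t →
          exp t - 1 ≤ 4*x*(1-x)*t * exp (t*x) →
          (μ {ω | x ≤ (1 / (n : ℝ)) * ∑ k, X k ω}).toReal ≤ (4 * x * (1 - x)) ^ n := by
        intro t ht hineq
        have hint : ∀ i ∈ Finset.univ, Integrable (fun ω => exp (t * X i ω)) μ :=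
          fun i _ => integrable_exp_unif μ (X i) (hmeas i) (hmap i) t
        have hintsum := hindep.integrable_exp_mul_sum hmeas hint
        have hset : {ω | x ≤ (1 / (n : ℝ)) * ∑ k, X k ω}
            = {ω | (n:ℝ)*x ≤ (∑ i, X i) ω} := by
          ext ω
          simp only [Set.mem_setOf_eq, Finset.sum_apply]
          rw [one_div, inv_mul_eq_div, le_div_iff₀ hn', mul_comm]
        have hch := measure_ge_le_exp_mul_mgf (μ := μ) (X := ∑ i, X i) (t := t)
          ((n:ℝ)*x) ht.le hintsum
        have hmgfsum : mgf (∑ i, X i) μ t = ((exp t - 1)/t) ^ n := by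
          rw [hindep.mgf_sum hmeas]
          have : ∀ i : Fin n, mgf (X i) μ t = (exp t - 1)/t :=
            fun i => mgf_unif μ (X i) (hmeas i) (hmap i) t ht.ne'
          simp [this, Finset.prod_const, Finset.card_univ]
          rw [div_pow]
        have hone : exp (-t * ((n:ℝ)*x)) = (exp (-(t*x)))^n := by
          rw [← Real.exp_nat_mul]
          congr 1
          ring
        have hper : exp (-(t*x)) * ((exp t - 1)/t) ≤ 4*x*(1-x) := by
          have hE : (0:ℝ) < exp (t*x) := exp_pos _
          have h5 : exp (-(t*x)) * ((exp t - 1)/t) = (exp t - 1) / (t * exp (t*x)) := by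
            rw [Real.exp_neg]
            ring
          rw [h5, div_le_iff₀ (by positivity)]
          nlinarith [hineq]
        have hpernn : (0:ℝ) ≤ exp (-(t*x)) * ((exp t - 1)/t) := by
          have h1 : (1:ℝ) ≤ exp t := by
            have := Real.add_one_le_exp t
            linarith
          have : (0:ℝ) ≤ (exp t - 1)/t := div_nonneg (by linarith) ht.le
          exact mul_nonneg (exp_pos _).le this
        calc (μ {ω | x ≤ (1 / (n : ℝ)) * ∑ k, X k ω}).toReal
            = (μ {ω | (n:ℝ)*x ≤ (∑ i, X i) ω}).toReal := by rw [hset]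
          _ ≤ exp (-t * ((n:ℝ)*x)) * mgf (∑ i, X i) μ t := hch
          _ = (exp (-(t*x)) * ((exp t - 1)/t)) ^ n := by
              rw [hmgfsum, hone, mul_pow]
          _ ≤ (4 * x * (1 - x)) ^ n := pow_le_pow_left₀ hpernn hper n
      rcases le_or_gt x (33/50) with hc | hc
      · exact key (5*(2*x-1)) (by linarith) (regionB x hx1 hc)
      · have hb : (0:ℝ) < 1 - x := by linarith
        exact key ((1-x)⁻¹) (inv_pos.mpr hb) (regionA x hc.le hxlt1)
end
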